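/- Let H be an n×n Hermitian matrix over ℂ and for T > 0 let ρ_T = exp(-H/T)/Tr[exp(-H/T)] be the Gibbs state, with von Neumann entropy S(ρ_T). Then, as T → ∞, ln(n) − S(ρ_T) = O(T^{-2}); i.e., the entropy equals ln(n) up to a correction of order T^{-2}. -/

import Mathlib

open scoped Classical

open Matrix Filter Asymptotics ComplexOrder

/-- Positive-semidefinite matrix square root (0 if not PSD). -/
noncomputable def msqrt {m : Type*} [Fintype m] [DecidableEq m] (A : Matrix m m ℂ) :
    Matrix m m ℂ :=
  if h : A.PosSemidef then
    (h.1.eigenvectorUnitary : Matrix m m ℂ) * diagonal (((↑) : ℝ → ℂ) ∘ Real.sqrt ∘ h.1.eigenvalues) *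
      (star h.1.eigenvectorUnitary : Matrix m m ℂ)
  else 0

/-- Fidelity between density matrices. -/
noncomputable def Fid {m : Type*} [Fintype m] [DecidableEq m] (ρ σ : Matrix m m ℂ) : ℝ :=
  ((msqrt (msqrt ρ * σ * msqrt ρ)).trace).re ^ 2

/-- Quantum Fisher information of a family of states at a point. -/
noncomputable def QFI {m : Type*} [Fintype m] [DecidableEq m] (ρ : ℝ → Matrix m m ℂ) (ξ : ℝ) : ℝ :=
  -2 * iteratedDeriv 2 (fun ε => Fid (ρ ξ) (ρ (ξ + ε))) 0

/-- Gibbs state exp((-1/T) H)/Z. -/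
noncomputable def gibbs {m : Type*} [Fintype m] [DecidableEq m] (H : Matrix m m ℂ) (T : ℝ) :
    Matrix m m ℂ :=
  ((NormedSpace.exp ((-(T : ℂ)⁻¹) • H)).trace)⁻¹ • NormedSpace.exp ((-(T : ℂ)⁻¹) • H)

/-- Von Neumann entropy. -/
noncomputable def vnEntropy {m : Type*} [Fintype m] [DecidableEq m] (ρ : Matrix m m ℂ) : ℝ :=
  if h : ρ.IsHermitian then -∑ i, h.eigenvalues i * Real.log (h.eigenvalues i) else 0

section Helpers

variable {n : ℕ}

private lemma exp_sub_one_abs (x : ℝ) : |Real.exp x - 1| ≤ |x| * Real.exp |x| := by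
  rcases le_or_gt 0 x with hx | hx
  · rw [abs_of_nonneg (by nlinarith [Real.one_le_exp hx] : (0:ℝ) ≤ Real.exp x - 1),
      abs_of_nonneg hx]
    have h1 : -x + 1 ≤ Real.exp (-x) := Real.add_one_le_exp (-x)
    have h2 : Real.exp (-x) * Real.exp x = 1 := by rw [← Real.exp_add]; simp
    nlinarith [Real.exp_pos x]
  · have hex : Real.exp x < 1 := by
      rw [show (1:ℝ) = Real.exp 0 by simp]; exact Real.exp_lt_exp.2 hx
    rw [abs_of_nonpos (by linarith), abs_of_neg hx]
    have h1 : x + 1 ≤ Real.exp x := Real.add_one_le_exp x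
    nlinarith [Real.one_le_exp (le_of_lt (neg_pos.2 hx))]

private lemma trace_conj_diag {U : Matrix (Fin n) (Fin n) ℂ} (hU : star U * U = 1)
    (v : Fin n → ℂ) : (U * Matrix.diagonal v * star U).trace = ∑ i, v i := by
  rw [Matrix.trace_mul_cycle, hU, Matrix.one_mul, Matrix.trace_diagonal]

private lemma conj_diag_mul {U : Matrix (Fin n) (Fin n) ℂ} (hU : star U * U = 1)
    (v w : Fin n → ℂ) :
    (U * Matrix.diagonal v * star U) * (U * Matrix.diagonal w * star U)
      = U * Matrix.diagonal (fun i => v i * w i) * star U := by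
  have h : ∀ X : Matrix (Fin n) (Fin n) ℂ, star U * (U * X) = X := fun X => by
    rw [← Matrix.mul_assoc, hU, Matrix.one_mul]
  simp only [Matrix.mul_assoc]
  rw [h, ← Matrix.mul_assoc (Matrix.diagonal v), Matrix.diagonal_mul_diagonal]

private lemma conj_diag_herm (U : Matrix (Fin n) (Fin n) ℂ) (d : Fin n → ℝ) :
    (U * Matrix.diagonal (fun i => (d i : ℂ)) * star U).IsHermitian := by
  rw [Matrix.star_eq_conjTranspose]
  exact Matrix.isHermitian_mul_mul_conjTranspose U
    (Matrix.isHermitian_diagonal_iff.2 fun i =>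
      show star ((d i : ℝ) : ℂ) = ((d i : ℝ) : ℂ) by
        rw [Complex.star_def, Complex.conj_ofReal])

private lemma smul_conj_diag (c : ℂ) (U : Matrix (Fin n) (Fin n) ℂ) (v : Fin n → ℂ) :
    c • (U * Matrix.diagonal v * star U)
      = U * Matrix.diagonal (fun i => c * v i) * star U := by
  have h : Matrix.diagonal (fun i => c * v i) = c • Matrix.diagonal v := by
    rw [← Matrix.diagonal_smul]; rfl
  rw [h, mul_smul_comm, smul_mul_assoc]

private lemma exp_real_smul {H : Matrix (Fin n) (Fin n) ℂ} (hherm : H.IsHermitian) (b : ℝ) :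
    NormedSpace.exp ((b : ℂ) • H) =
      (hherm.eigenvectorUnitary : Matrix (Fin n) (Fin n) ℂ) *
        Matrix.diagonal (fun i => (Real.exp (b * hherm.eigenvalues i) : ℂ)) *
        star (hherm.eigenvectorUnitary : Matrix (Fin n) (Fin n) ℂ) := by
  have hU1 : star (hherm.eigenvectorUnitary : Matrix (Fin n) (Fin n) ℂ) *
      (hherm.eigenvectorUnitary : Matrix (Fin n) (Fin n) ℂ) = 1 :=
    Unitary.coe_star_mul_self hherm.eigenvectorUnitary
  have hU2 : (hherm.eigenvectorUnitary : Matrix (Fin n) (Fin n) ℂ) *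
      star (hherm.eigenvectorUnitary : Matrix (Fin n) (Fin n) ℂ) = 1 :=
    Unitary.coe_mul_star_self hherm.eigenvectorUnitary
  have hUnit : IsUnit (hherm.eigenvectorUnitary : Matrix (Fin n) (Fin n) ℂ) :=
    ⟨⟨_, _, hU2, hU1⟩, rfl⟩
  have hinv : (hherm.eigenvectorUnitary : Matrix (Fin n) (Fin n) ℂ)⁻¹ =
      star (hherm.eigenvectorUnitary : Matrix (Fin n) (Fin n) ℂ) :=
    Matrix.inv_eq_left_inv hU1
  have h1 : (b : ℂ) • H
      = (hherm.eigenvectorUnitary : Matrix (Fin n) (Fin n) ℂ) *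
          Matrix.diagonal (fun i => ((b * hherm.eigenvalues i : ℝ) : ℂ)) *
          (hherm.eigenvectorUnitary : Matrix (Fin n) (Fin n) ℂ)⁻¹ := by
    rw [hinv]
    conv_lhs => rw [hherm.spectral_theorem]
    rw [Unitary.conjStarAlgAut_apply, smul_conj_diag]
    have hfun : (fun i => (b:ℂ) * (RCLike.ofReal ∘ hherm.eigenvalues) i)
        = fun i => ((b * hherm.eigenvalues i : ℝ) : ℂ) := by
      funext i
      simp [Function.comp]
    rw [hfun]
  rw [h1, Matrix.exp_conj _ _ hUnit, hinv, Matrix.exp_diagonal]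
  simp only [Pi.exp_def, ← Complex.exp_eq_exp_ℂ, ← Complex.ofReal_exp]

private lemma entropy_bound (hn : 0 < n) (ν : Fin n → ℝ) (h0 : ∀ i, 0 ≤ ν i)
    (h1 : ∑ i, ν i = 1) :
    0 ≤ Real.log n + ∑ i, ν i * Real.log (ν i) ∧
      Real.log n + ∑ i, ν i * Real.log (ν i) ≤ (n : ℝ) * (∑ i, ν i ^ 2) - 1 := by
  have hn' : (0:ℝ) < n := by exact_mod_cast hn
  have hlog : Real.log n = ∑ i, ν i * Real.log n := by
    rw [← Finset.sum_mul, h1, one_mul]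
  rw [hlog, ← Finset.sum_add_distrib]
  constructor
  · have hterm : ∀ i, ν i - 1 / n ≤ ν i * Real.log n + ν i * Real.log (ν i) := by
      intro i
      rcases eq_or_lt_of_le (h0 i) with h | h
      · rw [← h]
        simp
      · rw [← mul_add, ← Real.log_mul (ne_of_gt hn') (ne_of_gt h)]
        have hlg : 1 - ((n:ℝ) * ν i)⁻¹ ≤ Real.log ((n:ℝ) * ν i) :=
          Real.one_sub_inv_le_log_of_pos (by positivity)
        have hfe : ν i * (1 - ((n:ℝ) * ν i)⁻¹) = ν i - 1/n := by
          field_simp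
        nlinarith
    have hle : ∑ i : Fin n, (ν i - 1 / (n:ℝ))
        ≤ ∑ i, (ν i * Real.log n + ν i * Real.log (ν i)) :=
      Finset.sum_le_sum (fun i _ => hterm i)
    have hsum : ∑ i : Fin n, (ν i - 1 / (n:ℝ)) = 0 := by
      rw [Finset.sum_sub_distrib, h1, Finset.sum_const, Finset.card_univ, Fintype.card_fin]
      rw [nsmul_eq_mul]
      field_simp
      ring
    linarith
  · have hterm : ∀ i, ν i * Real.log n + ν i * Real.log (ν i) ≤ (n:ℝ) * ν i ^ 2 - ν i := by
      intro i
      rcases eq_or_lt_of_le (h0 i) with h | h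
      · rw [← h]; simp
      · rw [← mul_add, ← Real.log_mul (ne_of_gt hn') (ne_of_gt h)]
        have hlg : Real.log ((n:ℝ) * ν i) ≤ (n:ℝ) * ν i - 1 :=
          Real.log_le_sub_one_of_pos (by positivity)
        nlinarith
    have hle : ∑ i, (ν i * Real.log n + ν i * Real.log (ν i))
        ≤ ∑ i : Fin n, ((n:ℝ) * ν i ^ 2 - ν i) :=
      Finset.sum_le_sum (fun i _ => hterm i)
    have hsum : ∑ i : Fin n, ((n:ℝ) * ν i ^ 2 - ν i) = (n:ℝ) * (∑ i, ν i ^ 2) - 1 := by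
      rw [Finset.sum_sub_distrib, h1, Finset.mul_sum]
    linarith

private lemma sum_sq_bound (hn : 0 < n) {β M : ℝ} (hβ0 : 0 ≤ β) (hβ1 : β ≤ 1) (hM : 1 ≤ M)
    (lam : Fin n → ℝ) (hlam : ∀ i, |lam i| ≤ M)
    (e : Fin n → ℝ) (he : ∀ i, e i = Real.exp (-β * lam i)) :
    (n:ℝ) * (∑ i, (e i / ∑ j, e j) ^ 2) - 1 ≤ M ^ 2 * Real.exp (4 * M) * β ^ 2 := by
  have hn' : (0:ℝ) < n := by exact_mod_cast hn
  have habs : ∀ i, |(-β) * lam i| ≤ β * M := by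
    intro i
    rw [abs_mul, abs_neg, abs_of_nonneg hβ0]
    exact mul_le_mul_of_nonneg_left (hlam i) hβ0
  have hβM : β * M ≤ M := by nlinarith
  have hδle : ∀ i, |e i - 1| ≤ β * M * Real.exp M := by
    intro i
    have h1 := exp_sub_one_abs ((-β) * lam i)
    have h2 : |(-β) * lam i| * Real.exp |(-β) * lam i| ≤ (β * M) * Real.exp M := by
      apply mul_le_mul (habs i) (Real.exp_le_exp.2 ((habs i).trans hβM)) (Real.exp_pos _).le
      nlinarith
    rw [he i]
    exact le_trans (by simpa using h1) h2
  have hδsq : ∑ i, (e i - 1) ^ 2 ≤ (n:ℝ) * (β * M * Real.exp M) ^ 2 := by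
    calc ∑ i, (e i - 1) ^ 2 ≤ ∑ _i : Fin n, (β * M * Real.exp M) ^ 2 := by
          apply Finset.sum_le_sum
          intro i _
          rw [← sq_abs]
          exact pow_le_pow_left₀ (abs_nonneg _) (hδle i) 2
      _ = (n:ℝ) * (β * M * Real.exp M) ^ 2 := by
          rw [Finset.sum_const, Finset.card_univ, Fintype.card_fin, nsmul_eq_mul]
  have hZe : ∑ j, e j = (n:ℝ) + ∑ i, (e i - 1) := by
    rw [Finset.sum_sub_distrib, Finset.sum_const, Finset.card_univ, Fintype.card_fin,
      nsmul_eq_mul, mul_one]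
    ring
  have hs2 : ∑ i, e i ^ 2 = ∑ i, (e i - 1) ^ 2 + 2 * ∑ i, (e i - 1) + n := by
    have hx : ∀ i : Fin n, e i ^ 2 = (e i - 1) ^ 2 + 2 * (e i - 1) + 1 := fun i => by ring
    rw [Finset.sum_congr rfl (fun i _ => hx i), Finset.sum_add_distrib, Finset.sum_add_distrib,
      Finset.sum_const, Finset.card_univ, Fintype.card_fin, nsmul_eq_mul, mul_one,
      ← Finset.mul_sum]
  have key : (n:ℝ) * (∑ i, e i ^ 2) - (∑ j, e j) ^ 2
      = (n:ℝ) * ∑ i, (e i - 1) ^ 2 - (∑ i, (e i - 1)) ^ 2 := by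
    rw [hZe, hs2]; ring
  have helo : ∀ i, Real.exp (-M) ≤ e i := by
    intro i
    rw [he i]
    apply Real.exp_le_exp.2
    have h3 := (abs_le.1 (habs i)).1
    linarith
  have hZlo : (n:ℝ) * Real.exp (-M) ≤ ∑ j, e j := by
    calc (n:ℝ) * Real.exp (-M) = ∑ _i : Fin n, Real.exp (-M) := by
          rw [Finset.sum_const, Finset.card_univ, Fintype.card_fin, nsmul_eq_mul]
      _ ≤ ∑ j, e j := Finset.sum_le_sum fun i _ => helo i
  have hZpos : (0:ℝ) < ∑ j, e j := lt_of_lt_of_le (by positivity) hZlo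
  have hZ2 : ((n:ℝ) * Real.exp (-M)) ^ 2 ≤ (∑ j, e j) ^ 2 :=
    pow_le_pow_left₀ (by positivity) hZlo 2
  have hrw : (n:ℝ) * (∑ i, (e i / ∑ j, e j) ^ 2) - 1
      = ((n:ℝ) * (∑ i, e i ^ 2) - (∑ j, e j) ^ 2) / (∑ j, e j) ^ 2 := by
    have hss : ∑ i, (e i / ∑ j, e j) ^ 2 = (∑ i, e i ^ 2) / (∑ j, e j) ^ 2 := by
      rw [Finset.sum_div]
      exact Finset.sum_congr rfl fun i _ => by rw [div_pow]
    rw [hss]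
    field_simp
  have hA : (n:ℝ) * (∑ i, e i ^ 2) - (∑ j, e j) ^ 2
      ≤ (n:ℝ) ^ 2 * (β * M * Real.exp M) ^ 2 := by
    nlinarith [sq_nonneg (∑ i, (e i - 1))]
  have hB : (0:ℝ) ≤ (n:ℝ) ^ 2 * (β * M * Real.exp M) ^ 2 := by positivity
  calc (n:ℝ) * (∑ i, (e i / ∑ j, e j) ^ 2) - 1
      = ((n:ℝ) * (∑ i, e i ^ 2) - (∑ j, e j) ^ 2) / (∑ j, e j) ^ 2 := hrw
    _ ≤ ((n:ℝ) ^ 2 * (β * M * Real.exp M) ^ 2) / (∑ j, e j) ^ 2 :=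
        (div_le_div_iff_of_pos_right (by positivity)).2 hA
    _ ≤ ((n:ℝ) ^ 2 * (β * M * Real.exp M) ^ 2) / ((n:ℝ) * Real.exp (-M)) ^ 2 :=
        div_le_div_of_nonneg_left hB (by positivity) hZ2
    _ = M ^ 2 * Real.exp (4 * M) * β ^ 2 := by
        have h4 : Real.exp (4 * M) = Real.exp M ^ 4 := by
          rw [show (4:ℝ) * M = M * ((4:ℕ):ℝ) by push_cast; ring, Real.exp_mul, Real.rpow_natCast]
        rw [Real.exp_neg, h4]
        have hne : Real.exp M ≠ 0 := (Real.exp_pos M).ne'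
        field_simp

end Helpers

/-- The entropy of a Gibbs state equals `ln n` up to `O(T⁻²)`:
`ln(n) − S(ρ_T) = O(T⁻²)` as `T → ∞`. -/
theorem stmt15 {n : ℕ} (H : Matrix (Fin n) (Fin n) ℂ) (hherm : H.IsHermitian) :
    (fun T : ℝ => Real.log n - vnEntropy (gibbs H T))
      =O[atTop] (fun T : ℝ => T⁻¹ ^ 2) := by
  rcases Nat.eq_zero_or_pos n with hn | hn
  · subst hn
    have hent : ∀ T : ℝ, vnEntropy (gibbs H T) = 0 := by
      intro T
      rw [vnEntropy, dif_pos (by ext i j; exact i.elim0 : (gibbs H T).IsHermitian)]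
      simp
    simp only [hent, Nat.cast_zero, Real.log_zero, sub_zero]
    exact isBigO_zero _ _
  · have hn' : (0:ℝ) < n := by exact_mod_cast hn
    have hne : Nonempty (Fin n) := ⟨⟨0, hn⟩⟩
    set lam := hherm.eigenvalues with hlamdef
    set M : ℝ := 1 + ∑ i, |lam i| with hMdef
    have hM : 1 ≤ M := by
      have h0 : 0 ≤ ∑ i, |lam i| := Finset.sum_nonneg fun i _ => abs_nonneg _
      linarith
    have hlam : ∀ i, |lam i| ≤ M := by
      intro i
      have h0 : |lam i| ≤ ∑ j, |lam j| :=
        Finset.single_le_sum (f := fun j => |lam j|) (fun j _ => abs_nonneg _)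
          (Finset.mem_univ i)
      linarith
    rw [Asymptotics.isBigO_iff]
    refine ⟨M ^ 2 * Real.exp (4 * M), ?_⟩
    filter_upwards [Filter.eventually_ge_atTop 1] with T hT
    have hT0 : (0:ℝ) < T := lt_of_lt_of_le one_pos hT
    have hβ0 : 0 ≤ T⁻¹ := by positivity
    have hβ1 : T⁻¹ ≤ 1 := inv_le_one_of_one_le₀ hT
    set e : Fin n → ℝ := fun i => Real.exp (-T⁻¹ * lam i) with hedef
    have hZpos : (0:ℝ) < ∑ j, e j :=
      Finset.sum_pos (fun i _ => by rw [hedef]; exact Real.exp_pos _) Finset.univ_nonempty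
    set d : Fin n → ℝ := fun i => e i / ∑ j, e j with hddef
    have hd0 : ∀ i, 0 ≤ d i := fun i => by
      rw [hddef]
      have : 0 < e i := by rw [hedef]; exact Real.exp_pos _
      positivity
    have hU1 : star (hherm.eigenvectorUnitary : Matrix (Fin n) (Fin n) ℂ) *
        (hherm.eigenvectorUnitary : Matrix (Fin n) (Fin n) ℂ) = 1 :=
      Unitary.coe_star_mul_self hherm.eigenvectorUnitary
    have hb : (-(T:ℂ)⁻¹) = (((-T⁻¹ : ℝ)) : ℂ) := by push_cast; ring
    have hexp := exp_real_smul hherm (-T⁻¹)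
    have htr : (NormedSpace.exp ((-(T:ℂ)⁻¹) • H)).trace = ((∑ j, e j : ℝ) : ℂ) := by
      rw [hb, hexp, trace_conj_diag hU1]
      simp only [hedef, hlamdef, Complex.ofReal_sum]
    have hgibbs : gibbs H T = (hherm.eigenvectorUnitary : Matrix (Fin n) (Fin n) ℂ) *
        Matrix.diagonal (fun i => (d i : ℂ)) *
        star (hherm.eigenvectorUnitary : Matrix (Fin n) (Fin n) ℂ) := by
      rw [gibbs, htr, hb, hexp, smul_conj_diag]
      have hfun : (fun i => (((∑ j, e j : ℝ) : ℂ))⁻¹ *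
            ((Real.exp (-T⁻¹ * hherm.eigenvalues i) : ℝ) : ℂ))
          = fun i => ((d i : ℝ) : ℂ) := by
        funext i
        rw [hddef]
        simp only [hedef, hlamdef, Complex.ofReal_div, Complex.ofReal_sum]
        ring
      rw [hfun]
    have hgherm : (gibbs H T).IsHermitian := by
      rw [hgibbs]; exact conj_diag_herm _ d
    have hpsd : (gibbs H T).PosSemidef := by
      rw [hgibbs, Matrix.star_eq_conjTranspose]
      exact (Matrix.posSemidef_diagonal_iff.mpr fun i =>
        Complex.zero_le_real.mpr (hd0 i)).mul_mul_conjTranspose_same _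
    have hν0 : ∀ i, 0 ≤ hgherm.eigenvalues i := fun i => hpsd.eigenvalues_nonneg i
    have hV1 : star (hgherm.eigenvectorUnitary : Matrix (Fin n) (Fin n) ℂ) *
        (hgherm.eigenvectorUnitary : Matrix (Fin n) (Fin n) ℂ) = 1 :=
      Unitary.coe_star_mul_self hgherm.eigenvectorUnitary
    have hsp : gibbs H T = (hgherm.eigenvectorUnitary : Matrix (Fin n) (Fin n) ℂ) *
        Matrix.diagonal (fun i => ((hgherm.eigenvalues i : ℝ) : ℂ)) *
        star (hgherm.eigenvectorUnitary : Matrix (Fin n) (Fin n) ℂ) := by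
      conv_lhs => rw [hgherm.spectral_theorem]
      rfl
    have t1 : ∑ i, ((hgherm.eigenvalues i : ℝ) : ℂ) = ∑ i, ((d i : ℝ) : ℂ) := by
      rw [← trace_conj_diag hV1 (fun i => ((hgherm.eigenvalues i : ℝ) : ℂ)), ← hsp, hgibbs,
        trace_conj_diag hU1]
    have hd1 : ∑ i, d i = 1 := by
      simp only [hddef]
      rw [← Finset.sum_div]
      exact div_self hZpos.ne'
    have hsum : ∑ i, hgherm.eigenvalues i = 1 := by
      have : ∑ i, hgherm.eigenvalues i = ∑ i, d i := by exact_mod_cast t1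
      rw [this, hd1]
    have t2 : ∑ i, (((hgherm.eigenvalues i : ℝ) : ℂ) * ((hgherm.eigenvalues i : ℝ) : ℂ))
        = ∑ i, (((d i : ℝ) : ℂ) * ((d i : ℝ) : ℂ)) := by
      have e1 : (gibbs H T * gibbs H T).trace
          = ∑ i, (((hgherm.eigenvalues i : ℝ) : ℂ) * ((hgherm.eigenvalues i : ℝ) : ℂ)) := by
        conv_lhs => rw [hsp]
        rw [conj_diag_mul hV1, trace_conj_diag hV1]
      have e2 : (gibbs H T * gibbs H T).trace
          = ∑ i, (((d i : ℝ) : ℂ) * ((d i : ℝ) : ℂ)) := by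
        conv_lhs => rw [hgibbs]
        rw [conj_diag_mul hU1, trace_conj_diag hU1]
      rw [← e1, e2]
    have hsq : ∑ i, hgherm.eigenvalues i ^ 2 = ∑ i, d i ^ 2 := by
      have h : ∑ i, hgherm.eigenvalues i * hgherm.eigenvalues i = ∑ i, d i * d i := by
        exact_mod_cast t2
      simpa [pow_two] using h
    obtain ⟨hlow, hhigh⟩ := entropy_bound hn hgherm.eigenvalues hν0 hsum
    have hbd := sum_sq_bound hn hβ0 hβ1 hM lam hlam e (fun i => by rw [hedef])
    rw [vnEntropy, dif_pos hgherm, sub_neg_eq_add]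
    rw [Real.norm_eq_abs, Real.norm_eq_abs, abs_of_nonneg hlow,
      abs_of_nonneg (by positivity : (0:ℝ) ≤ T⁻¹ ^ 2)]
    calc Real.log n + ∑ i, hgherm.eigenvalues i * Real.log (hgherm.eigenvalues i)
        ≤ (n : ℝ) * (∑ i, hgherm.eigenvalues i ^ 2) - 1 := hhigh
      _ = (n : ℝ) * (∑ i, d i ^ 2) - 1 := by rw [hsq]
      _ ≤ M ^ 2 * Real.exp (4 * M) * T⁻¹ ^ 2 := by
          simpa only [hddef] using hbd
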